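/- Fix ε ∈ ℝ and define the desingularized Keyfitz–Kranzer–Dafermos vector field g : ℝ⁵ → ℝ⁵ by g(χ,x₁,s,x₃,x₄) = (εs, x₁·g̃₀ + (x₁² − 1) − s(χx₁ + x₃), s·g̃₀, x₃·g̃₀ − εx₁s, 2x₄·g̃₀ − εs), where g̃₀ = −x₁³/6 + (x₁/2)s² + (s/2)(χ + x₄). Then: (i) the real roots of the quartic X⁴ − 6X² + 6 = 0 are exactly ±√(3+√3) and ±√(3−√3); (ii) for every χ ∈ ℝ and every x₁ ∈ {√(3+√3), −√(3+√3), √(3−√3), −√(3−√3)}, the point (χ, x₁, 0, 0, 0) lies on the horizon {s = 0} and is an equilibrium of g, i.e. g(χ, x₁, 0, 0, 0) = 0. -/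
import Mathlib


open Real Set

/-- The auxiliary function `g̃₀ = -x₁³/6 + (x₁/2)s² + (s/2)(χ + x₄)`. -/
noncomputable def KKg0 (χ x₁ s x₄ : ℝ) : ℝ :=
  -(x₁ ^ 3) / 6 + (x₁ / 2) * s ^ 2 + (s / 2) * (χ + x₄)

/-- The desingularized Keyfitz–Kranzer–Dafermos vector field. -/
noncomputable def KKdesing (ε : ℝ) (P : ℝ × ℝ × ℝ × ℝ × ℝ) : ℝ × ℝ × ℝ × ℝ × ℝ :=
  have χ := P.1; have x₁ := P.2.1; have s := P.2.2.1
  have x₃ := P.2.2.2.1; have x₄ := P.2.2.2.2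
  (ε * s,
   x₁ * KKg0 χ x₁ s x₄ + (x₁ ^ 2 - 1) - s * (χ * x₁ + x₃),
   s * KKg0 χ x₁ s x₄,
   x₃ * KKg0 χ x₁ s x₄ - ε * x₁ * s,
   2 * x₄ * KKg0 χ x₁ s x₄ - ε * s)

/-- (i) The real roots of `X⁴ - 6X² + 6 = 0` are exactly
`±√(3+√3)` and `±√(3-√3)`; (ii) for every `χ` and every such root `x₁`, the point
`(χ, x₁, 0, 0, 0)` lies on the horizon `{s = 0}` and is an equilibrium of the
desingularized Keyfitz–Kranzer–Dafermos vector field. -/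
theorem keyfitz_kranzer_horizon_equilibria (ε : ℝ) :
    (∀ X : ℝ, X ^ 4 - 6 * X ^ 2 + 6 = 0 ↔
      (X = Real.sqrt (3 + Real.sqrt 3) ∨ X = -Real.sqrt (3 + Real.sqrt 3) ∨
       X = Real.sqrt (3 - Real.sqrt 3) ∨ X = -Real.sqrt (3 - Real.sqrt 3))) ∧
    (∀ χ x₁ : ℝ,
      (x₁ = Real.sqrt (3 + Real.sqrt 3) ∨ x₁ = -Real.sqrt (3 + Real.sqrt 3) ∨
       x₁ = Real.sqrt (3 - Real.sqrt 3) ∨ x₁ = -Real.sqrt (3 - Real.sqrt 3)) →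
      ((χ, x₁, (0 : ℝ), (0 : ℝ), (0 : ℝ)).2.2.1 = 0 ∧
        KKdesing ε (χ, x₁, 0, 0, 0) = 0)) := by

  have h3 : Real.sqrt 3 ^ 2 = 3 := Real.sq_sqrt (by norm_num)
  have h3le : Real.sqrt 3 ≤ 3 := by
    nlinarith [Real.sqrt_nonneg 3]
  have hp : Real.sqrt (3 + Real.sqrt 3) ^ 2 = 3 + Real.sqrt 3 :=
    Real.sq_sqrt (by positivity)
  have hm : Real.sqrt (3 - Real.sqrt 3) ^ 2 = 3 - Real.sqrt 3 :=
    Real.sq_sqrt (by linarith)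
  have key : ∀ X : ℝ, X ^ 4 - 6 * X ^ 2 + 6 = 0 ↔
      (X = Real.sqrt (3 + Real.sqrt 3) ∨ X = -Real.sqrt (3 + Real.sqrt 3) ∨
       X = Real.sqrt (3 - Real.sqrt 3) ∨ X = -Real.sqrt (3 - Real.sqrt 3)) := by
    intro X
    constructor
    · intro hX
      have hfac : (X ^ 2 - (3 + Real.sqrt 3)) * (X ^ 2 - (3 - Real.sqrt 3)) = 0 := by
        nlinarith [h3]
      rcases mul_eq_zero.mp hfac with h | h
      · have : (X - Real.sqrt (3 + Real.sqrt 3)) * (X + Real.sqrt (3 + Real.sqrt 3)) = 0 := by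
          nlinarith [hp]
        rcases mul_eq_zero.mp this with h' | h'
        · exact Or.inl (by linarith)
        · exact Or.inr (Or.inl (by linarith))
      · have : (X - Real.sqrt (3 - Real.sqrt 3)) * (X + Real.sqrt (3 - Real.sqrt 3)) = 0 := by
          nlinarith [hm]
        rcases mul_eq_zero.mp this with h' | h'
        · exact Or.inr (Or.inr (Or.inl (by linarith)))
        · exact Or.inr (Or.inr (Or.inr (by linarith)))
    · rintro (rfl | rfl | rfl | rfl) <;> nlinarith [hp, hm, h3]
  refine ⟨key, fun χ x₁ hx₁ => ⟨rfl, ?_⟩⟩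
  have hroot : x₁ ^ 4 - 6 * x₁ ^ 2 + 6 = 0 := (key x₁).mpr hx₁
  simp only [KKdesing, KKg0, Prod.mk.injEq]
  norm_num
  nlinarith [hroot]
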